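/- arXiv:1409.8038 — 5 statements merged into one kernel-verified Lean document; each statement's English description precedes it below -/
import Mathlib

section
/- Let x ∈ H¹_loc(ℝ) and let a : ℝ → ℝ be measurable with a(t) ≥ l₀ > 0 for all t. Let Ṽ : ℝ → ℝ be continuous with Ṽ ≥ 0, Ṽ(x) = 0 iff x ∈ {−1, 1}, Ṽ → +∞ at ±∞, and Ṽ bounded below by a positive constant on every set of the form {y : |y+1| ≥ η/2 and |y−1| ≥ η/2}. If J(x) = ∫_ℝ (½|ẋ(t)|² + a(t)Ṽ(x(t))) dt < ∞, then x(t) converges to −1 or to 1 as t → +∞, and x(t) converges to −1 or to 1 as t → −∞. -/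
open Set MeasureTheory Filter Topology

/-!
Write `f` for the integrand of `J` and `W = l₀ Ṽ`, so that `½ ẋ² + W(x) ≤ f`. Since `f` is
integrable, `W(x(t))` cannot stay above a positive level near `+∞`, so `x` comes back arbitrarily
late close to `-1` or `1`. On the annulus `η/2 ≤ |y - σ| ≤ η` around a well `σ` we have
`W ≥ d > 0`, and `½ ẋ² + d ≥ √(2d) |ẋ|`, so crossing the annulus costs action at least
`√(2d) η/2`. Once the tail of the action is below that amount, `x` is trapped within `η` of `σ`;
letting `η → 0` gives convergence. Reversing time handles `-∞`.
-/

theorem tendsto_setIntegral_Ioi_atTop_zero {E : Type*} [NormedAddCommGroup E] [NormedSpace ℝ E]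
    {μ : Measure ℝ} {f : ℝ → E} (hf : Integrable f μ) :
    Tendsto (fun T => ∫ t in Ioi T, f t ∂μ) atTop (𝓝 0) := by
  have h := tendsto_setIntegral_of_antitone (μ := μ) (fun T : ℝ => measurableSet_Ioi)
    (fun _ _ h => Ioi_subset_Ioi h) ⟨0, hf.integrableOn⟩
  have hempty : ⋂ T : ℝ, Ioi T = ∅ :=
    eq_empty_of_forall_notMem fun t ht => lt_irrefl t (mem_iInter.1 ht t)
  rwa [hempty, Measure.restrict_empty, integral_zero_measure] at h

theorem MeasureTheory.Integrable.frequently_atTop_lt {f : ℝ → ℝ} (hf : Integrable f) {d : ℝ}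
    (hd : 0 < d) :
    ∃ᶠ t in atTop, f t < d := by
  intro hge
  obtain ⟨T, hT⟩ := eventually_atTop.1 (hge.mono fun _ => le_of_not_gt)
  have hconst : IntegrableOn (fun _ => d) (Ioi T) := by
    refine Integrable.mono hf.integrableOn aestronglyMeasurable_const ?_
    refine (ae_restrict_iff' measurableSet_Ioi).2 (Eventually.of_forall fun t ht => ?_)
    rw [Real.norm_of_nonneg hd.le, Real.norm_of_nonneg (hd.le.trans (hT t (le_of_lt ht)))]
    exact hT t (le_of_lt ht)
  rcases (integrableOn_const_iff (C := d)).1 hconst with h | h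
  · exact hd.ne' (enorm_eq_zero.1 h)
  · simp at h

theorem mul_abs_sub_le_setIntegral {x x' f : ℝ → ℝ} {u v c : ℝ} (huv : u ≤ v) (hc : 0 ≤ c)
    (hf : IntegrableOn f (Ioc u v)) (hx : x v - x u = ∫ r in u..v, x' r)
    (hle : ∀ r ∈ Ioo u v, c * |x' r| ≤ f r) :
    c * |x v - x u| ≤ ∫ r in Ioc u v, f r := by
  rw [hx, intervalIntegral.integral_of_le huv, integral_Ioc_eq_integral_Ioo,
    integral_Ioc_eq_integral_Ioo]
  calc c * |∫ r in Ioo u v, x' r| ≤ c * ∫ r in Ioo u v, |x' r| := by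
        gcongr; exact abs_integral_le_integral_abs
    _ = ∫ r in Ioo u v, c * |x' r| := (integral_const_mul c _).symm
    _ ≤ ∫ r in Ioo u v, f r :=
        integral_mono_of_nonneg (Eventually.of_forall fun r => by positivity)
          (hf.mono_set Ioo_subset_Ioc_self) (ae_restrict_of_forall_mem measurableSet_Ioo hle)

theorem ContinuousOn.exists_crossing {g : ℝ → ℝ} {s t α β : ℝ} (hg : ContinuousOn g (Icc s t))
    (hst : s ≤ t) (hs : g s ≤ α) (ht : β ≤ g t) :
    ∃ u v, s ≤ u ∧ u ≤ v ∧ v ≤ t ∧ g u ≤ α ∧ β ≤ g v ∧ ∀ r ∈ Ioo u v, α < g r ∧ g r < β := by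
  set S := Icc s t ∩ g ⁻¹' Ici β
  have hS : IsClosed S := hg.preimage_isClosed_of_isClosed isClosed_Icc isClosed_Ici
  have hSbdd : BddBelow S := ⟨s, fun r hr => hr.1.1⟩
  have hv : sInf S ∈ S := hS.csInf_mem ⟨t, ⟨⟨hst, le_rfl⟩, ht⟩⟩ hSbdd
  set v := sInf S
  set U := Icc s v ∩ g ⁻¹' Iic α
  have hU : IsClosed U :=
    (hg.mono (Icc_subset_Icc_right hv.1.2)).preimage_isClosed_of_isClosed isClosed_Icc
      isClosed_Iic
  have hUbdd : BddAbove U := ⟨v, fun r hr => hr.1.2⟩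
  have hu : sSup U ∈ U := hU.csSup_mem ⟨s, ⟨⟨le_rfl, hv.1.1⟩, hs⟩⟩ hUbdd
  refine ⟨sSup U, v, hu.1.1, hu.1.2, hv.1.2, hu.2, hv.2, fun r hr => ⟨?_, ?_⟩⟩
  · by_contra! hr'
    exact hr.1.not_ge (le_csSup hUbdd ⟨⟨hu.1.1.trans hr.1.le, hr.2.le⟩, hr'⟩)
  · by_contra! hr'
    exact hr.2.not_ge (csInf_le hSbdd ⟨⟨hu.1.1.trans hr.1.le, hr.2.le.trans hv.1.2⟩, hr'⟩)

theorem sqrt_two_mul_mul_abs_le {d : ℝ} (hd : 0 ≤ d) (p : ℝ) :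
    √(2 * d) * |p| ≤ 1 / 2 * p ^ 2 + d := by
  nlinarith [sq_nonneg (|p| - √(2 * d)), Real.sq_sqrt (by positivity : 0 ≤ 2 * d), sq_abs p]

theorem half_le_abs_add_one_and_abs_sub_one {σ η y : ℝ} (hσ : σ = -1 ∨ σ = 1) (hη : η ≤ 1)
    (hlo : η / 2 ≤ |y - σ|) (hhi : |y - σ| ≤ η) : η / 2 ≤ |y + 1| ∧ η / 2 ≤ |y - 1| := by
  rcases hσ with rfl | rfl
  · rw [sub_neg_eq_add] at hlo hhi
    refine ⟨hlo, ?_⟩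
    rw [abs_le] at hhi
    rw [abs_of_neg (by linarith)]
    linarith
  · refine ⟨?_, hlo⟩
    rw [abs_le] at hhi
    rw [abs_of_pos (by linarith)]
    linarith

theorem continuous_of_sub_eq_intervalIntegral {x x' : ℝ → ℝ} (hx' : LocallyIntegrable x')
    (hx : ∀ s t, x t - x s = ∫ r in s..t, x' r) : Continuous x := by
  have hprim : Continuous fun t => ∫ r in (0 : ℝ)..t, x' r :=
    intervalIntegral.continuous_primitive
      (fun _ _ => (hx'.integrableOn_isCompact isCompact_uIcc).intervalIntegrable) 0
  have hx_eq : x = fun t => x 0 + ∫ r in (0 : ℝ)..t, x' r :=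
    funext fun t => by linarith [hx 0 t]
  rw [hx_eq]
  exact continuous_const.add hprim

theorem tendsto_or_of_forall_exists_eventually_abs_sub_lt {α : Type*} {l : Filter α} [l.NeBot]
    {x : α → ℝ} (h : ∀ η > 0, η ≤ 1 → ∃ σ : ℝ, (σ = -1 ∨ σ = 1) ∧ ∀ᶠ t in l, |x t - σ| < η) :
    Tendsto x l (𝓝 (-1)) ∨ Tendsto x l (𝓝 1) := by
  obtain ⟨σ₀, hσ₀, h₀⟩ := h 1 one_pos le_rfl
  have hlim : Tendsto x l (𝓝 σ₀) := by
    refine Metric.tendsto_nhds.2 fun ε hε => ?_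
    obtain ⟨σ, hσ, hη⟩ := h (min ε 1) (lt_min hε one_pos) (min_le_right _ _)
    have hσσ₀ : σ = σ₀ := by
      obtain ⟨t, ht, ht₀⟩ := (hη.and h₀).exists
      have : |σ - σ₀| < 2 := by
        have := abs_sub_le σ (x t) σ₀
        rw [abs_sub_comm σ (x t)] at this
        linarith [min_le_right ε 1]
      rcases hσ with rfl | rfl <;> rcases hσ₀ with rfl | rfl <;> first | rfl | norm_num at this
    subst hσσ₀
    exact hη.mono fun t ht => (Real.dist_eq _ _).symm ▸ ht.trans_le (min_le_left _ _)
  rcases hσ₀ with rfl | rfl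
  · exact Or.inl hlim
  · exact Or.inr hlim

section Action

variable {x x' W f : ℝ → ℝ}

theorem abs_sub_lt_of_setIntegral_Ioi_lt (hx : Continuous x)
    (hx' : ∀ s t, x t - x s = ∫ r in s..t, x' r) (hf : Integrable f) (hf0 : 0 ≤ f)
    (hfx : ∀ t, 1 / 2 * x' t ^ 2 + W (x t) ≤ f t) {σ η d T s t : ℝ} (hσ : σ = -1 ∨ σ = 1)
    (hη : η ≤ 1) (hd : 0 ≤ d) (hWd : ∀ y, η / 2 ≤ |y + 1| → η / 2 ≤ |y - 1| → d ≤ W y)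
    (hT : ∫ r in Ioi T, f r < √(2 * d) * (η / 2)) (hTs : T ≤ s) (hst : s ≤ t)
    (hs : |x s - σ| ≤ η / 2) : |x t - σ| < η := by
  by_contra! ht
  have hg : Continuous fun r => |x r - σ| := by fun_prop
  obtain ⟨u, v, hsu, huv, -, hu, hv, hmid⟩ := hg.continuousOn.exists_crossing hst hs ht
  have hjump : η / 2 ≤ |x v - x u| := by
    have := abs_sub_abs_le_abs_sub (x v - σ) (x u - σ)
    rw [sub_sub_sub_cancel_right] at this
    linarith
  have hle : ∀ r ∈ Ioo u v, √(2 * d) * |x' r| ≤ f r := fun r hr => by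
    obtain ⟨h₁, h₂⟩ := half_le_abs_add_one_and_abs_sub_one hσ hη (hmid r hr).1.le (hmid r hr).2.le
    linarith [sqrt_two_mul_mul_abs_le hd (x' r), hWd _ h₁ h₂, hfx r]
  have : √(2 * d) * (η / 2) ≤ ∫ r in Ioi T, f r :=
    calc √(2 * d) * (η / 2) ≤ √(2 * d) * |x v - x u| := by gcongr
      _ ≤ ∫ r in Ioc u v, f r :=
        mul_abs_sub_le_setIntegral huv (Real.sqrt_nonneg _) hf.integrableOn (hx' u v) hle
      _ ≤ ∫ r in Ioi T, f r :=
        setIntegral_mono_set hf.integrableOn (Eventually.of_forall hf0)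
          (Ioc_subset_Ioi_self.trans (Ioi_subset_Ioi (hTs.trans hsu))).eventuallyLE
  linarith

theorem exists_eventually_abs_sub_lt (hx : Continuous x)
    (hx' : ∀ s t, x t - x s = ∫ r in s..t, x' r) (hW0 : ∀ y, 0 ≤ W y)
    (hWpos : ∀ η > 0, ∃ d > 0, ∀ y : ℝ, η / 2 ≤ |y + 1| → η / 2 ≤ |y - 1| → d ≤ W y)
    (hf : Integrable f) (hfx : ∀ t, 1 / 2 * x' t ^ 2 + W (x t) ≤ f t) {η : ℝ} (hη0 : 0 < η)
    (hη1 : η ≤ 1) : ∃ σ : ℝ, (σ = -1 ∨ σ = 1) ∧ ∀ᶠ t in atTop, |x t - σ| < η := by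
  have hWf : ∀ t, W (x t) ≤ f t := fun t => by linarith [hfx t, sq_nonneg (x' t)]
  have hf0 : 0 ≤ f := fun t => (hW0 _).trans (hWf t)
  obtain ⟨d, hd, hWd⟩ := hWpos η hη0
  obtain ⟨T, hT⟩ := ((tendsto_setIntegral_Ioi_atTop_zero hf).eventually_lt_const
    (by positivity : (0 : ℝ) < √(2 * d) * (η / 2))).exists
  have hnear : ∃ᶠ t in atTop, |x t + 1| < η / 2 ∨ |x t - 1| < η / 2 :=
    (hf.frequently_atTop_lt hd).mono fun t ht => by
      by_contra! h
      linarith [hWd _ h.1 h.2, hWf t]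
  obtain ⟨s, hs, hTs⟩ := (hnear.and_eventually (eventually_ge_atTop T)).exists
  have htrap : ∀ σ, (σ = -1 ∨ σ = 1) → |x s - σ| ≤ η / 2 →
      ∃ σ : ℝ, (σ = -1 ∨ σ = 1) ∧ ∀ᶠ t in atTop, |x t - σ| < η := fun σ hσ hsσ =>
    ⟨σ, hσ, (eventually_ge_atTop s).mono fun t hst =>
      abs_sub_lt_of_setIntegral_Ioi_lt hx hx' hf hf0 hfx hσ hη1 hd.le hWd hT hTs hst hsσ⟩
  rcases hs with hs | hs
  · exact htrap (-1) (Or.inl rfl) (by rw [sub_neg_eq_add]; exact hs.le)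
  · exact htrap 1 (Or.inr rfl) hs.le

theorem tendsto_atTop_of_integrable_action (hx : Continuous x)
    (hx' : ∀ s t, x t - x s = ∫ r in s..t, x' r) (hW0 : ∀ y, 0 ≤ W y)
    (hWpos : ∀ η > 0, ∃ d > 0, ∀ y : ℝ, η / 2 ≤ |y + 1| → η / 2 ≤ |y - 1| → d ≤ W y)
    (hf : Integrable f) (hfx : ∀ t, 1 / 2 * x' t ^ 2 + W (x t) ≤ f t) :
    Tendsto x atTop (𝓝 (-1)) ∨ Tendsto x atTop (𝓝 1) :=
  tendsto_or_of_forall_exists_eventually_abs_sub_lt fun _ hη0 hη1 =>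
    exists_eventually_abs_sub_lt hx hx' hW0 hWpos hf hfx hη0 hη1

theorem tendsto_atBot_of_integrable_action (hx : Continuous x)
    (hx' : ∀ s t, x t - x s = ∫ r in s..t, x' r) (hW0 : ∀ y, 0 ≤ W y)
    (hWpos : ∀ η > 0, ∃ d > 0, ∀ y : ℝ, η / 2 ≤ |y + 1| → η / 2 ≤ |y - 1| → d ≤ W y)
    (hf : Integrable f) (hfx : ∀ t, 1 / 2 * x' t ^ 2 + W (x t) ≤ f t) :
    Tendsto x atBot (𝓝 (-1)) ∨ Tendsto x atBot (𝓝 1) := by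
  have hx'_neg : ∀ s t, x (-t) - x (-s) = ∫ r in s..t, -x' (-r) := fun s t => by
    rw [intervalIntegral.integral_neg, intervalIntegral.integral_comp_neg,
      intervalIntegral.integral_symm, neg_neg, hx']
  have h := tendsto_atTop_of_integrable_action (by fun_prop) hx'_neg hW0 hWpos
    hf.comp_neg fun t => by simpa only [neg_sq] using hfx (-t)
  have hback : ∀ σ : ℝ, Tendsto (fun t => x (-t)) atTop (𝓝 σ) → Tendsto x atBot (𝓝 σ) :=
    fun σ hσ => by simpa only [Function.comp_def, neg_neg] using hσ.comp tendsto_neg_atBot_atTop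
  exact h.imp (hback _) (hback _)

end Action

theorem stmt2_general (x x' a Vt : ℝ → ℝ) (l₀ : ℝ) (hl₀ : 0 < l₀)
    (ha : ∀ t, l₀ ≤ a t)
    (hx'loc : MeasureTheory.LocallyIntegrable x')
    (hAC : ∀ s t : ℝ, x t - x s = ∫ r in s..t, x' r)
    (hVnonneg : ∀ y, 0 ≤ Vt y)
    (hVpos : ∀ η > 0, ∃ d > 0, ∀ y : ℝ, η / 2 ≤ |y + 1| → η / 2 ≤ |y - 1| → d ≤ Vt y)
    (hJ : MeasureTheory.Integrable (fun t => (1 / 2) * (x' t) ^ 2 + a t * Vt (x t))) :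
    (Filter.Tendsto x Filter.atTop (nhds (-1)) ∨ Filter.Tendsto x Filter.atTop (nhds 1)) ∧
    (Filter.Tendsto x Filter.atBot (nhds (-1)) ∨ Filter.Tendsto x Filter.atBot (nhds 1)) := by
  have hx := continuous_of_sub_eq_intervalIntegral hx'loc hAC
  have hW0 : ∀ y, 0 ≤ l₀ * Vt y := fun y => mul_nonneg hl₀.le (hVnonneg y)
  have hWpos : ∀ η > 0, ∃ d > 0, ∀ y : ℝ, η / 2 ≤ |y + 1| → η / 2 ≤ |y - 1| → d ≤ l₀ * Vt y :=
    fun η hη => by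
      obtain ⟨d, hd, hVd⟩ := hVpos η hη
      exact ⟨l₀ * d, by positivity, fun y h₁ h₂ => by gcongr; exact hVd y h₁ h₂⟩
  have hfx : ∀ t, 1 / 2 * x' t ^ 2 + l₀ * Vt (x t) ≤ 1 / 2 * x' t ^ 2 + a t * Vt (x t) :=
    fun t => by gcongr; exacts [hVnonneg _, ha t]
  exact ⟨tendsto_atTop_of_integrable_action hx hAC hW0 hWpos hJ hfx,
    tendsto_atBot_of_integrable_action hx hAC hW0 hWpos hJ hfx⟩

theorem stmt2 (x x' a Vt : ℝ → ℝ) (l₀ : ℝ) (hl₀ : 0 < l₀)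
    (ha_meas : Measurable a) (ha : ∀ t, l₀ ≤ a t)
    (hx'loc : MeasureTheory.LocallyIntegrable x')
    (hAC : ∀ s t : ℝ, x t - x s = ∫ r in s..t, x' r)
    (hVcont : Continuous Vt) (hVnonneg : ∀ y, 0 ≤ Vt y)
    (hVzero : ∀ y, Vt y = 0 ↔ (y = -1 ∨ y = 1))
    (hVtop : Filter.Tendsto Vt Filter.atTop Filter.atTop)
    (hVbot : Filter.Tendsto Vt Filter.atBot Filter.atTop)
    (hVpos : ∀ η > 0, ∃ d > 0, ∀ y : ℝ, η / 2 ≤ |y + 1| → η / 2 ≤ |y - 1| → d ≤ Vt y)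
    (hJ : MeasureTheory.Integrable (fun t => (1 / 2) * (x' t) ^ 2 + a t * Vt (x t))) :
    (Filter.Tendsto x Filter.atTop (nhds (-1)) ∨ Filter.Tendsto x Filter.atTop (nhds 1)) ∧
    (Filter.Tendsto x Filter.atBot (nhds (-1)) ∨ Filter.Tendsto x Filter.atBot (nhds 1)) :=
  stmt2_general x x' a Vt l₀ hl₀ ha hx'loc hAC hVnonneg hVpos hJ
end

section
/- Let A, T > 0, let a : ℝ → ℝ satisfy a(t) ≥ l₀ > 0, and let Ṽ : ℝ → ℝ be continuous, nonnegative, and coercive (Ṽ(y) → +∞ as |y| → +∞). Then there exists B > 0 (depending only on A, T, l₀, Ṽ) such that every x ∈ H¹_loc(ℝ) with ∫_ℝ (½|ẋ|² + a(t)Ṽ(x(t))) dt ≤ A satisfies ‖x‖_{H¹([−T,T])} ≤ B. -/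
open Set MeasureTheory Filter
open scoped Interval ENNReal

/-!
The energy bound controls `∫ ẋ²` by `2A`. It also forces `Ṽ(x(t₀)) < A / (T l₀)` at some
`t₀ ∈ [-T, T]`, since otherwise the potential part of the energy on `[-T, T]` alone would
be at least `2A`; by coercivity `|x(t₀)|` is then bounded. The fundamental theorem of calculus and
`|ẋ| ≤ (1 + ẋ²) / 2` bound `|x|` on `[-T, T]` by `|x(t₀)| + T + A`, which bounds `∫ x²`.
-/

lemma exists_abs_le_of_lt_of_tendsto {V : ℝ → ℝ} (hTop : Tendsto V atTop atTop)
    (hBot : Tendsto V atBot atTop) (K : ℝ) : ∃ R, ∀ y, V y < K → |y| ≤ R := by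
  obtain ⟨M₁, hM₁⟩ := (hTop.eventually (eventually_ge_atTop K)).exists_forall_of_atTop
  obtain ⟨M₂, hM₂⟩ := (hBot.eventually (eventually_ge_atTop K)).exists_forall_of_atBot
  refine ⟨max M₁ (-M₂), fun y hy => abs_le.2 ⟨?_, ?_⟩⟩
  · have : M₂ < y := lt_of_not_ge fun h => (hM₂ y h).not_gt hy
    linarith [le_max_right M₁ (-M₂)]
  · have : y < M₁ := lt_of_not_ge fun h => (hM₁ y h).not_gt hy
    linarith [le_max_left M₁ (-M₂)]

section SetIntegral

variable {X : Type*} [MeasurableSpace X] {μ : Measure X} {s : Set X} {f : X → ℝ}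

lemma exists_mem_lt_of_setIntegral_lt {c : ℝ} (hs : MeasurableSet s) (hμs : μ s ≠ ∞)
    (hf : IntegrableOn f s μ) (h : ∫ x in s, f x ∂μ < c * μ.real s) : ∃ x ∈ s, f x < c := by
  by_contra! hge
  exact (setIntegral_ge_of_const_le_real hs hμs hge hf).not_gt h

lemma two_mul_setIntegral_abs_le (hs : MeasurableSet s) (hμs : μ s ≠ ∞)
    (hf : IntegrableOn f s μ) (hf₂ : IntegrableOn (fun x => f x ^ 2) s μ) :
    2 * ∫ x in s, |f x| ∂μ ≤ μ.real s + ∫ x in s, f x ^ 2 ∂μ := by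
  have hone : IntegrableOn (fun _ => (1 : ℝ)) s μ := integrableOn_const hμs
  calc 2 * ∫ x in s, |f x| ∂μ = ∫ x in s, 2 * |f x| ∂μ := (integral_const_mul _ _).symm
    _ ≤ ∫ x in s, (1 + f x ^ 2) ∂μ :=
        setIntegral_mono_on (hf.abs.const_mul 2) (hone.add hf₂) hs fun x _ => by
          nlinarith [sq_nonneg (|f x| - 1), sq_abs (f x)]
    _ = μ.real s + ∫ x in s, f x ^ 2 ∂μ := by
        rw [integral_add hone hf₂, setIntegral_const, smul_eq_mul, mul_one]

end SetIntegral

lemma abs_intervalIntegral_le_setIntegral_abs {f : ℝ → ℝ} {a b s t : ℝ}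
    (hf : IntegrableOn f (Icc a b)) (hs : s ∈ Icc a b) (ht : t ∈ Icc a b) :
    |∫ r in s..t, f r| ≤ ∫ r in Icc a b, |f r| :=
  calc |∫ r in s..t, f r| ≤ ∫ r in Ι s t, |f r| := by
        simpa only [Real.norm_eq_abs] using
          intervalIntegral.norm_integral_le_integral_norm_uIoc (f := f) (μ := volume)
    _ ≤ ∫ r in Icc a b, |f r| :=
        setIntegral_mono_set hf.abs (ae_of_all _ fun r => abs_nonneg _)
          (ae_of_all _ (uIoc_subset_uIcc.trans (uIcc_subset_Icc hs ht)))

section Lagrangian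

noncomputable def lagrangian (a V x x' : ℝ → ℝ) (t : ℝ) : ℝ := 1 / 2 * x' t ^ 2 + a t * V (x t)

variable {a V x x' : ℝ → ℝ}

lemma sq_le_two_mul_lagrangian (ha : ∀ t, 0 ≤ a t) (hV : ∀ y, 0 ≤ V y) (t : ℝ) :
    x' t ^ 2 ≤ 2 * lagrangian a V x x' t := by
  have := mul_nonneg (ha t) (hV (x t))
  unfold lagrangian
  linarith

lemma mul_le_lagrangian {l₀ : ℝ} (ha : ∀ t, l₀ ≤ a t) (hV : ∀ y, 0 ≤ V y) (t : ℝ) :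
    l₀ * V (x t) ≤ lagrangian a V x x' t := by
  have := mul_le_mul_of_nonneg_right (ha t) (hV (x t))
  unfold lagrangian
  nlinarith [sq_nonneg (x' t)]

lemma integrable_sq_of_integrable_lagrangian (ha : ∀ t, 0 ≤ a t) (hV : ∀ y, 0 ≤ V y)
    (hx' : AEStronglyMeasurable x') (hL : Integrable (lagrangian a V x x')) :
    Integrable fun t => x' t ^ 2 :=
  (hL.const_mul 2).mono' (hx'.pow 2) <| ae_of_all _ fun t => by
    rw [Real.norm_eq_abs, abs_of_nonneg (sq_nonneg _)]
    exact sq_le_two_mul_lagrangian ha hV t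

lemma integral_sq_le_two_mul_integral_lagrangian (ha : ∀ t, 0 ≤ a t) (hV : ∀ y, 0 ≤ V y)
    (hx' : AEStronglyMeasurable x') (hL : Integrable (lagrangian a V x x')) :
    ∫ t, x' t ^ 2 ≤ 2 * ∫ t, lagrangian a V x x' t := by
  rw [← integral_const_mul]
  exact integral_mono (integrable_sq_of_integrable_lagrangian ha hV hx' hL) (hL.const_mul 2)
    (sq_le_two_mul_lagrangian ha hV)

lemma exists_mem_Icc_lt_of_integral_lagrangian_le {A T l₀ : ℝ} (hT : 0 < T) (hl₀ : 0 < l₀)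
    (ha : ∀ t, l₀ ≤ a t) (hV : ∀ y, 0 ≤ V y) (hL : Integrable (lagrangian a V x x'))
    (hA : 0 < A) (hLA : ∫ t, lagrangian a V x x' t ≤ A) :
    ∃ t ∈ Icc (-T) T, V (x t) < A / (T * l₀) := by
  have hL_nonneg : ∀ t, 0 ≤ lagrangian a V x x' t := fun t =>
    (mul_nonneg hl₀.le (hV (x t))).trans (mul_le_lagrangian ha hV t)
  have hlt : ∫ t in Icc (-T) T, lagrangian a V x x' t
      < l₀ * (A / (T * l₀)) * volume.real (Icc (-T) T) := by
    calc ∫ t in Icc (-T) T, lagrangian a V x x' t ≤ ∫ t, lagrangian a V x x' t :=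
          setIntegral_le_integral hL (ae_of_all _ hL_nonneg)
      _ < 2 * A := by linarith
      _ = l₀ * (A / (T * l₀)) * volume.real (Icc (-T) T) := by
          rw [Real.volume_real_Icc_of_le (by linarith)]
          field_simp
          ring
  obtain ⟨t, ht, hVt⟩ := exists_mem_lt_of_setIntegral_lt measurableSet_Icc
    measure_Icc_lt_top.ne hL.integrableOn hlt
  exact ⟨t, ht, lt_of_mul_lt_mul_left ((mul_le_lagrangian ha hV t).trans_lt hVt) hl₀.le⟩

end Lagrangian

theorem stmt4_general (a Vt : ℝ → ℝ) (A T l₀ : ℝ)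
    (hA : 0 < A) (hT : 0 < T) (hl₀ : 0 < l₀) (ha : ∀ t, l₀ ≤ a t)
    (hVnonneg : ∀ y, 0 ≤ Vt y)
    (hVcoer : Filter.Tendsto Vt Filter.atTop Filter.atTop)
    (hVcoer' : Filter.Tendsto Vt Filter.atBot Filter.atTop) :
    ∃ B > (0 : ℝ), ∀ x x' : ℝ → ℝ,
      MeasureTheory.LocallyIntegrable x' →
      (∀ s t : ℝ, x t - x s = ∫ r in s..t, x' r) →
      MeasureTheory.Integrable (fun t => (1 / 2) * (x' t) ^ 2 + a t * Vt (x t)) →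
      (∫ t, ((1 / 2) * (x' t) ^ 2 + a t * Vt (x t))) ≤ A →
      Real.sqrt ((∫ t in Set.Icc (-T) T, (x t) ^ 2) +
        ∫ t in Set.Icc (-T) T, (x' t) ^ 2) ≤ B := by
  obtain ⟨R, hR⟩ := exists_abs_le_of_lt_of_tendsto hVcoer hVcoer' (A / (T * l₀))
  set C := R + T + A
  refine ⟨√(2 * T * C ^ 2 + 2 * A), by positivity, fun x x' hx' hx hL hLA => ?_⟩
  have ha₀ : ∀ t, 0 ≤ a t := fun t => hl₀.le.trans (ha t)
  have hLA' : ∫ t, lagrangian a Vt x x' t ≤ A := hLA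
  have hx'₂ := integrable_sq_of_integrable_lagrangian ha₀ hVnonneg hx'.aestronglyMeasurable hL
  have hx'₂_le : ∫ t in Icc (-T) T, x' t ^ 2 ≤ 2 * A := by
    linarith [setIntegral_le_integral (s := Icc (-T) T) hx'₂ (ae_of_all _ fun t => sq_nonneg _),
      integral_sq_le_two_mul_integral_lagrangian ha₀ hVnonneg hx'.aestronglyMeasurable hL]
  have hx'_int : IntegrableOn x' (Icc (-T) T) := hx'.integrableOn_isCompact isCompact_Icc
  have hx'_abs_le : ∫ t in Icc (-T) T, |x' t| ≤ T + A := by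
    have := two_mul_setIntegral_abs_le measurableSet_Icc measure_Icc_lt_top.ne hx'_int
      hx'₂.integrableOn
    rw [Real.volume_real_Icc_of_le (by linarith)] at this
    linarith
  obtain ⟨t₀, ht₀, hVt₀⟩ :=
    exists_mem_Icc_lt_of_integral_lagrangian_le hT hl₀ ha hVnonneg hL hA hLA'
  have hx_le : ∀ t ∈ Icc (-T) T, |x t| ≤ C := fun t ht => by
    have hFTC : |x t - x t₀| ≤ ∫ r in Icc (-T) T, |x' r| := by
      rw [hx t₀ t]
      exact abs_intervalIntegral_le_setIntegral_abs hx'_int ht₀ ht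
    linarith [abs_sub_abs_le_abs_sub (x t) (x t₀), hR _ hVt₀]
  have hx₂_le : ∫ t in Icc (-T) T, x t ^ 2 ≤ 2 * T * C ^ 2 := by
    have := norm_setIntegral_le_of_norm_le_const (f := fun t => x t ^ 2) (μ := volume)
      measure_Icc_lt_top fun t ht => by
        rw [norm_pow, Real.norm_eq_abs]
        exact pow_le_pow_left₀ (abs_nonneg _) (hx_le t ht) 2
    rw [Real.volume_real_Icc_of_le (by linarith)] at this
    linarith [Real.le_norm_self (∫ t in Icc (-T) T, x t ^ 2)]
  exact Real.sqrt_le_sqrt (by linarith)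

theorem stmt4 (a Vt : ℝ → ℝ) (A T l₀ : ℝ)
    (hA : 0 < A) (hT : 0 < T) (hl₀ : 0 < l₀) (ha : ∀ t, l₀ ≤ a t)
    (hVcont : Continuous Vt) (hVnonneg : ∀ y, 0 ≤ Vt y)
    (hVcoer : Filter.Tendsto Vt Filter.atTop Filter.atTop)
    (hVcoer' : Filter.Tendsto Vt Filter.atBot Filter.atTop) :
    ∃ B > (0 : ℝ), ∀ x x' : ℝ → ℝ,
      MeasureTheory.LocallyIntegrable x' →
      (∀ s t : ℝ, x t - x s = ∫ r in s..t, x' r) →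
      MeasureTheory.Integrable (fun t => (1 / 2) * (x' t) ^ 2 + a t * Vt (x t)) →
      (∫ t, ((1 / 2) * (x' t) ^ 2 + a t * Vt (x t))) ≤ A →
      Real.sqrt ((∫ t in Set.Icc (-T) T, (x t) ^ 2) +
        ∫ t in Set.Icc (-T) T, (x' t) ^ 2) ≤ B :=
  stmt4_general a Vt A T l₀ hA hT hl₀ ha hVnonneg hVcoer hVcoer'
end

section
/- Let a : ℝ → ℝ be continuous and bounded with inf a = a(0), and for ε > 0 define B_ε = inf{J_ε(x) : x ∈ W}, where J_ε(x) = ∫(½|ẋ|² + a(εt)Ṽ(x(t))) dt, and B₀ = inf{J₀(x) : x ∈ W} with J₀ using the constant weight a(0). Assume B₀ is attained by some w₀ ∈ W with J₀(w₀) < ∞. Then B_ε → B₀ as ε → 0⁺. -/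
open Set MeasureTheory Filter Topology

/-- `x` belongs to `W`: locally absolutely continuous with derivative `x'`,
`x + 1 ∈ H¹((-∞,0])`, `x - 1 ∈ H¹([0,∞))`. -/
def MemW (x x' : ℝ → ℝ) : Prop :=
  MeasureTheory.LocallyIntegrable x' ∧
  (∀ s t : ℝ, x t - x s = ∫ r in s..t, x' r) ∧
  MeasureTheory.IntegrableOn (fun t => (x t + 1) ^ 2) (Set.Iic 0) ∧
  MeasureTheory.IntegrableOn (fun t => (x t - 1) ^ 2) (Set.Ici 0) ∧
  MeasureTheory.Integrable (fun t => (x' t) ^ 2)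

/-!
Testing `B_ε` with `w₀` bounds it above by `J_ε(w₀)`, which tends to `J₀(w₀) = B₀` by dominated
convergence. For the lower bound, `J₀ ≤ J_ε` pointwise since `a(εt) ≥ a(0)`. This comparison also
has to survive the junk value `0` of a divergent Bochner integral; it does because `a(0) > 0`, so
that both Lagrangians are comparable to `x'² + V(x)` and are integrable together. Positivity of
`a(0)` comes from the minimizer: the slowed-down path `w₀(t/2)` has half the kinetic energy (which
is positive, as paths in `W` are not constant) and twice the potential energy, so it would have
smaller action if `a(0) ≤ 0`.
-/

lemma integrableOn_comp_mul_left_iff_of_preimage_eq {f : ℝ → ℝ} {s : Set ℝ} {l : ℝ}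
    (hl : l ≠ 0) (hs : MeasurableSet s) (hpre : (l * ·) ⁻¹' s = s) :
    IntegrableOn (fun t => f (l * t)) s ↔ IntegrableOn f s := by
  calc IntegrableOn (fun t => f (l * t)) s
      ↔ Integrable (((l * ·) ⁻¹' s).indicator (f ∘ (l * ·))) := by
        rw [hpre, integrable_indicator_iff hs]; rfl
    _ ↔ Integrable fun t => s.indicator f (l * t) := Iff.rfl
    _ ↔ IntegrableOn f s := by rw [integrable_comp_mul_left_iff _ hl, integrable_indicator_iff hs]

lemma integral_mono_of_nonneg_of_le_const_mul {α : Type*} [MeasurableSpace α] {μ : Measure α}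
    {f g : α → ℝ} (hf : 0 ≤ f) (hfg : f ≤ g) (hg : AEStronglyMeasurable g μ) {C : ℝ}
    (hgC : ∀ a, g a ≤ C * f a) :
    ∫ a, f a ∂μ ≤ ∫ a, g a ∂μ := by
  by_cases hgi : Integrable g μ
  · exact integral_mono_of_nonneg (.of_forall hf) hgi (.of_forall hfg)
  · have hfi : ¬ Integrable f μ := fun hfi => hgi <| (hfi.const_mul C).mono' hg <|
      .of_forall fun a => by
        rw [Real.norm_eq_abs, abs_of_nonneg ((hf a).trans (hfg a))]
        exact hgC a
    rw [integral_undef hfi, integral_undef hgi]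

namespace MemW

variable {x x' : ℝ → ℝ}

lemma integrable_deriv_sq (h : MemW x x') : Integrable fun t => (x' t) ^ 2 :=
  h.2.2.2.2

lemma intervalIntegrable (h : MemW x x') (s t : ℝ) : IntervalIntegrable x' volume s t :=
  (h.1.integrableOn_isCompact isCompact_uIcc).intervalIntegrable

lemma continuous (h : MemW x x') : Continuous x := by
  have hx : x = fun t => x 0 + ∫ r in (0 : ℝ)..t, x' r := by
    funext t
    linarith [h.2.1 0 t]
  rw [hx]
  exact continuous_const.add (intervalIntegral.continuous_primitive h.intervalIntegrable 0)

lemma aestronglyMeasurable_lagrangian (h : MemW x x') {V q : ℝ → ℝ} (hV : Continuous V)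
    (hq : Continuous q) :
    AEStronglyMeasurable (fun t => (1 / 2) * (x' t) ^ 2 + q t * V (x t)) volume :=
  ((h.1.aestronglyMeasurable.pow 2).const_mul _).add
    (hq.mul (hV.comp h.continuous)).aestronglyMeasurable

/-- A path in `W` cannot be constant: it tends to `-1` at `-∞` and to `1` at `+∞`. -/
lemma integral_deriv_sq_pos (h : MemW x x') : 0 < ∫ t, (x' t) ^ 2 := by
  obtain ⟨-, hftc, hleft, hright, hsq⟩ := h
  refine (integral_nonneg fun t => sq_nonneg (x' t)).lt_of_ne fun h0 => ?_
  have hx' : x' =ᵐ[volume] 0 := by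
    filter_upwards [(integral_eq_zero_iff_of_nonneg (fun t => sq_nonneg (x' t)) hsq).1 h0.symm]
      with t ht
    exact pow_eq_zero_iff two_ne_zero |>.1 ht
  have hconst : ∀ t, x t = x 0 := fun t => by
    have hint : ∫ r in (0 : ℝ)..t, x' r = 0 := by
      rw [intervalIntegral.integral_congr_ae (hx'.mono fun r hr _ => hr)]
      simp
    linarith [hftc 0 t]
  simp only [hconst] at hleft hright
  rw [integrableOn_const_iff, Real.volume_Iic] at hleft
  rw [integrableOn_const_iff, Real.volume_Ici] at hright
  simp only [lt_self_iff_false, or_false, enorm_eq_zero, pow_eq_zero_iff two_ne_zero]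
    at hleft hright
  linarith

lemma comp_mul_left (h : MemW x x') {l : ℝ} (hl : 0 < l) :
    MemW (fun t => x (l * t)) (fun t => l * x' (l * t)) := by
  obtain ⟨hloc, hftc, hleft, hright, hsq⟩ := h
  have hqmp : Measure.QuasiMeasurePreserving (l * ·) volume volume :=
    ⟨measurable_const_mul l, by
      rw [Real.map_volume_mul_left hl.ne']
      exact Measure.smul_absolutelyContinuous⟩
  have hmeas : AEStronglyMeasurable (fun t => l * x' (l * t)) volume :=
    (hloc.aestronglyMeasurable.comp_quasiMeasurePreserving hqmp).const_mul l
  have hsq' : Integrable fun t => (l * x' (l * t)) ^ 2 := by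
    simpa only [mul_pow] using
      ((integrable_comp_mul_left_iff (fun t => x' t ^ 2) hl.ne').2 hsq).const_mul (l ^ 2)
  refine ⟨((memLp_two_iff_integrable_sq hmeas).2 hsq').locallyIntegrable (by norm_num),
    fun s t => ?_, ?_, ?_, hsq'⟩
  · rw [intervalIntegral.integral_const_mul, ← smul_eq_mul,
      intervalIntegral.smul_integral_comp_mul_left, hftc]
  · refine (integrableOn_comp_mul_left_iff_of_preimage_eq hl.ne' measurableSet_Iic ?_).2 hleft
    rw [preimage_const_mul_Iic₀ _ hl, zero_div]
  · refine (integrableOn_comp_mul_left_iff_of_preimage_eq hl.ne' measurableSet_Ici ?_).2 hright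
    rw [preimage_const_mul_Ici₀ _ hl, zero_div]

end MemW

lemma integral_lagrangian_comp_mul_left {u U : ℝ → ℝ} (hu : Integrable fun t => u t ^ 2)
    (hU : Integrable U) {l : ℝ} (hl : 0 < l) (c : ℝ) :
    ∫ t, ((1 / 2) * (l * u (l * t)) ^ 2 + c * U (l * t))
      = l * (∫ t, (1 / 2) * (u t) ^ 2) + (c / l) * ∫ t, U t := by
  have key := Measure.integral_comp_mul_left (fun s => l ^ 2 * ((1 / 2) * u s ^ 2) + c * U s) l
  rw [smul_eq_mul, integral_add ((hu.const_mul _).const_mul _) (hU.const_mul _),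
    integral_const_mul, integral_const_mul, integral_const_mul c, abs_of_pos (inv_pos.2 hl)] at key
  rw [integral_const_mul]
  convert key using 1
  · congr 1; ext t; ring
  · field_simp

section Lagrangian

variable {x x' V : ℝ → ℝ}

lemma integral_lagrangian_le_of_const_le (hx : MemW x x') (hV : Continuous V)
    (hV0 : ∀ y, 0 ≤ V y) {q : ℝ → ℝ} (hq : Continuous q) {c M : ℝ} (hc : 0 < c)
    (hcq : ∀ t, c ≤ q t) (hqM : ∀ t, q t ≤ M) :
    ∫ t, ((1 / 2) * (x' t) ^ 2 + c * V (x t)) ≤ ∫ t, ((1 / 2) * (x' t) ^ 2 + q t * V (x t)) := by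
  refine integral_mono_of_nonneg_of_le_const_mul (C := max 1 (M / c))
    (fun t => by have := hV0 (x t); positivity)
    (fun t => by gcongr; exacts [hV0 _, hcq t]) (hx.aestronglyMeasurable_lagrangian hV hq)
    fun t => ?_
  have hone : 1 ≤ max 1 (M / c) := le_max_left _ _
  have hM : M ≤ max 1 (M / c) * c := (div_le_iff₀ hc).1 (le_max_right _ _)
  nlinarith [mul_le_mul_of_nonneg_right (hqM t) (hV0 (x t)),
    mul_le_mul_of_nonneg_right hM (hV0 (x t)),
    mul_le_mul_of_nonneg_right hone (sq_nonneg (x' t))]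

lemma continuous_integral_lagrangian_comp_mul (hx : MemW x x') (hV : Continuous V)
    (hV0 : ∀ y, 0 ≤ V y) (hVx : Integrable fun t => V (x t)) {a : ℝ → ℝ} (ha : Continuous a)
    {M : ℝ} (haM : ∀ t, |a t| ≤ M) :
    Continuous fun ε => ∫ t, ((1 / 2) * (x' t) ^ 2 + a (ε * t) * V (x t)) := by
  refine continuous_of_dominated (bound := fun t => (1 / 2) * (x' t) ^ 2 + M * V (x t))
    (fun ε => hx.aestronglyMeasurable_lagrangian hV (ha.comp (continuous_const_mul ε)))
    (fun ε => .of_forall fun t => ?_) ((hx.integrable_deriv_sq.const_mul _).add (hVx.const_mul M))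
    (.of_forall fun t => by fun_prop)
  obtain ⟨haM₁, haM₂⟩ := abs_le.1 (haM (ε * t))
  rw [Real.norm_eq_abs, abs_le]
  constructor <;> nlinarith [sq_nonneg (x' t),
    mul_nonneg (by linarith : 0 ≤ M + a (ε * t)) (hV0 (x t)),
    mul_nonneg (by linarith : 0 ≤ M - a (ε * t)) (hV0 (x t))]

lemma pos_of_isMinimizer_lagrangian (hx : MemW x x') (hV0 : ∀ y, 0 ≤ V y)
    (hVx : Integrable fun t => V (x t)) {c : ℝ}
    (hmin : ∀ y y', MemW y y' → ∫ t, ((1 / 2) * (x' t) ^ 2 + c * V (x t))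
      ≤ ∫ t, ((1 / 2) * (y' t) ^ 2 + c * V (y t))) :
    0 < c := by
  have hK : 0 < ∫ t, (1 / 2) * (x' t) ^ 2 := by
    rw [integral_const_mul]
    exact mul_pos (by norm_num) hx.integral_deriv_sq_pos
  have hD : 0 ≤ ∫ t, V (x t) := integral_nonneg fun t => hV0 (x t)
  have hscaled := hmin _ _ (hx.comp_mul_left (by norm_num : (0 : ℝ) < 1 / 2))
  rw [integral_lagrangian_comp_mul_left hx.integrable_deriv_sq hVx (by norm_num),
    integral_add (hx.integrable_deriv_sq.const_mul _) (hVx.const_mul c), integral_const_mul c]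
    at hscaled
  by_contra! hc
  nlinarith [mul_nonpos_of_nonpos_of_nonneg hc hD]

end Lagrangian

theorem stmt13 (a Vt : ℝ → ℝ) (Beps : ℝ → ℝ) (B0 : ℝ)
    (ha_cont : Continuous a) (ha_bdd : ∃ M, ∀ t, |a t| ≤ M)
    (ha_min : ∀ t, a 0 ≤ a t)
    (hVcont : Continuous Vt) (hVnonneg : ∀ y, 0 ≤ Vt y)
    (hB0 : IsGLB {c | ∃ x x', MemW x x' ∧
      (∫ t, ((1 / 2) * (x' t) ^ 2 + a 0 * Vt (x t))) = c} B0)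
    (hBe : ∀ ε > (0 : ℝ), IsGLB {c | ∃ x x', MemW x x' ∧
      (∫ t, ((1 / 2) * (x' t) ^ 2 + a (ε * t) * Vt (x t))) = c} (Beps ε))
    (w₀ w₀' : ℝ → ℝ) (hw₀ : MemW w₀ w₀')
    (hw₀V : MeasureTheory.Integrable (fun t => Vt (w₀ t)))
    (hw₀att : (∫ t, ((1 / 2) * (w₀' t) ^ 2 + a 0 * Vt (w₀ t))) = B0) :
    Filter.Tendsto Beps (nhdsWithin 0 (Set.Ioi 0)) (nhds B0) := by
  obtain ⟨M, hM⟩ := ha_bdd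
  have ha0 : 0 < a 0 := pos_of_isMinimizer_lagrangian hw₀ hVnonneg hw₀V
    fun x x' hx => hw₀att ▸ hB0.1 ⟨x, x', hx, rfl⟩
  have hlower : ∀ ε > (0 : ℝ), B0 ≤ Beps ε := by
    refine fun ε hε => (hBe ε hε).2 ?_
    rintro _ ⟨x, x', hx, rfl⟩
    exact (hB0.1 ⟨x, x', hx, rfl⟩).trans <| integral_lagrangian_le_of_const_le hx hVcont
      hVnonneg (ha_cont.comp (continuous_const_mul ε)) ha0 (fun t => ha_min _)
      fun t => (le_abs_self _).trans (hM _)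
  have hupper : Tendsto (fun ε => ∫ t, ((1 / 2) * (w₀' t) ^ 2 + a (ε * t) * Vt (w₀ t)))
      (𝓝[>] 0) (𝓝 B0) := by
    have := (continuous_integral_lagrangian_comp_mul hw₀ hVcont hVnonneg hw₀V ha_cont hM).tendsto 0
    simp only [zero_mul, hw₀att] at this
    exact this.mono_left nhdsWithin_le_nhds
  refine tendsto_of_tendsto_of_tendsto_of_le_of_le' tendsto_const_nhds hupper ?_ ?_
  all_goals filter_upwards [self_mem_nhdsWithin] with ε hε
  · exact hlower ε hε
  · exact (hBe ε hε).1 ⟨w₀, w₀', hw₀, rfl⟩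
end

section
/- Let a, a_P : ℝ → ℝ be continuous with 0 < inf a and a(t) < a_P(t) for all t, and let Ṽ ≥ 0 be continuous vanishing exactly at ±1. Define J(x) = ∫(½|ẋ|² + a(t)Ṽ(x)) dt and J_P(x) = ∫(½|ẋ|² + a_P(t)Ṽ(x)) dt, with infima B and B_P over W. If B_P is attained by some w_P ∈ W with ∫ Ṽ(w_P) dt > 0, then B < B_P. -/
open Set MeasureTheory Filter Topology

/-! The minimizer `w_P` of the periodic problem is an admissible competitor for `B`, and since
`a < a_P` everywhere while `Ṽ(w_P)` is not a.e. zero, `J(w_P) < J_P(w_P) = B_P`. -/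

namespace MeasureTheory

variable {α : Type*} [MeasurableSpace α] {μ : Measure α}

theorem integral_mul_pos_of_pos_left {c g : α → ℝ} (hc : ∀ x, 0 < c x) (hg : 0 ≤ g)
    (hcg : Integrable (fun x => c x * g x) μ) (hg_pos : 0 < ∫ x, g x ∂μ) :
    0 < ∫ x, c x * g x ∂μ := by
  have hcg_nonneg : 0 ≤ fun x => c x * g x := fun x => mul_nonneg (hc x).le (hg x)
  have hsupport : Function.support (fun x => c x * g x) = Function.support g := by
    ext x
    simp [(hc x).ne']
  rw [integral_pos_iff_support_of_nonneg hcg_nonneg hcg, hsupport]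
  exact (integral_pos_iff_support_of_nonneg hg (Integrable.of_integral_ne_zero hg_pos.ne')).1
    hg_pos

theorem Integrable.mul_of_nonneg_of_le {a b g : α → ℝ} (hb : Integrable (fun x => b x * g x) μ)
    (ha_meas : AEStronglyMeasurable a μ) (hg_meas : AEStronglyMeasurable g μ)
    (ha : ∀ x, 0 ≤ a x) (hab : ∀ x, a x ≤ b x) (hg : ∀ x, 0 ≤ g x) :
    Integrable (fun x => a x * g x) μ :=
  hb.mono (ha_meas.mul hg_meas) <| ae_of_all _ fun x => by
    rw [Real.norm_of_nonneg (mul_nonneg (ha x) (hg x)),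
      Real.norm_of_nonneg (mul_nonneg ((ha x).trans (hab x)) (hg x))]
    exact mul_le_mul_of_nonneg_right (hab x) (hg x)

end MeasureTheory

theorem stmt14_general (a aP Vt : ℝ → ℝ) (B BP : ℝ)
    (ha_cont : Continuous a)
    (ha_pos : ∃ l₀ > (0 : ℝ), ∀ t, l₀ ≤ a t) (hlt : ∀ t, a t < aP t)
    (hVnonneg : ∀ y, 0 ≤ Vt y)
    (hB : IsGLB {c | ∃ x x', MemW x x' ∧
      (∫ t, ((1 / 2) * (x' t) ^ 2 + a t * Vt (x t))) = c} B)
    (wP wP' : ℝ → ℝ) (hwP : MemW wP wP')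
    (hwPV : MeasureTheory.Integrable (fun t => Vt (wP t)))
    (hwPaV : MeasureTheory.Integrable (fun t => aP t * Vt (wP t)))
    (hwPVpos : 0 < ∫ t, Vt (wP t))
    (hwPatt : (∫ t, ((1 / 2) * (wP' t) ^ 2 + aP t * Vt (wP t))) = BP) :
    B < BP := by
  obtain ⟨l₀, hl₀, hla⟩ := ha_pos
  have hkin : Integrable fun t => (1 / 2 : ℝ) * wP' t ^ 2 := hwP.2.2.2.2.const_mul _
  have haV : Integrable fun t => a t * Vt (wP t) :=
    hwPaV.mul_of_nonneg_of_le ha_cont.aestronglyMeasurable hwPV.1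
      (fun t => hl₀.le.trans (hla t)) (fun t => (hlt t).le) (fun t => hVnonneg _)
  have hgap : 0 < ∫ t, (aP t - a t) * Vt (wP t) :=
    integral_mul_pos_of_pos_left (fun t => sub_pos.2 (hlt t)) (fun t => hVnonneg _)
      (by simpa only [sub_mul, Pi.sub_def] using hwPaV.sub haV) hwPVpos
  have hdiff : (∫ t, ((1 / 2) * (wP' t) ^ 2 + aP t * Vt (wP t)))
      - ∫ t, ((1 / 2) * (wP' t) ^ 2 + a t * Vt (wP t)) = ∫ t, (aP t - a t) * Vt (wP t) := by
    have hJP : Integrable fun t => (1 / 2 : ℝ) * wP' t ^ 2 + aP t * Vt (wP t) := hkin.add hwPaV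
    have hJ : Integrable fun t => (1 / 2 : ℝ) * wP' t ^ 2 + a t * Vt (wP t) := hkin.add haV
    rw [← integral_sub hJP hJ]
    congr 1 with t
    ring
  calc B ≤ ∫ t, ((1 / 2) * (wP' t) ^ 2 + a t * Vt (wP t)) := hB.1 ⟨wP, wP', hwP, rfl⟩
    _ < BP := by linarith

theorem stmt14 (a aP Vt : ℝ → ℝ) (B BP : ℝ)
    (ha_cont : Continuous a) (haP_cont : Continuous aP)
    (ha_pos : ∃ l₀ > (0 : ℝ), ∀ t, l₀ ≤ a t) (hlt : ∀ t, a t < aP t)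
    (hVcont : Continuous Vt) (hVnonneg : ∀ y, 0 ≤ Vt y)
    (hVzero : ∀ y, Vt y = 0 ↔ (y = -1 ∨ y = 1))
    (hB : IsGLB {c | ∃ x x', MemW x x' ∧
      (∫ t, ((1 / 2) * (x' t) ^ 2 + a t * Vt (x t))) = c} B)
    (hBP : IsGLB {c | ∃ x x', MemW x x' ∧
      (∫ t, ((1 / 2) * (x' t) ^ 2 + aP t * Vt (x t))) = c} BP)
    (wP wP' : ℝ → ℝ) (hwP : MemW wP wP')
    (hwPV : MeasureTheory.Integrable (fun t => Vt (wP t)))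
    (hwPaV : MeasureTheory.Integrable (fun t => aP t * Vt (wP t)))
    (hwPVpos : 0 < ∫ t, Vt (wP t))
    (hwPatt : (∫ t, ((1 / 2) * (wP' t) ^ 2 + aP t * Vt (wP t))) = BP) :
    B < BP :=
  stmt14_general a aP Vt B BP ha_cont ha_pos hlt hVnonneg hB wP wP' hwP hwPV hwPaV hwPVpos hwPatt
end

section
/- Let a : ℝ → ℝ be continuous with a(t) ≥ l₀ > 0 and a(t) → +∞ as |t| → +∞ (coercive). Let (Uₙ) ⊂ H¹_loc(ℝ) with J(Uₙ) = ∫(½|U̇ₙ|² + a(t)Ṽ(Uₙ)) dt bounded, and let sₙ < tₙ be such that Uₙ(t) ∈ [−1+ε/2, 1−ε/2] for all t ∈ [sₙ, tₙ], with tₙ − sₙ bounded, |Uₙ(tₙ) − Uₙ(sₙ)| → 2 − ε, and ε ∈ (0,1) fixed. If Ṽ ≥ V₀ > 0 on [−1+ε/2, 1−ε/2], then the sequence (sₙ) is bounded. -/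
open Set MeasureTheory Filter Topology

/-!
Crossing from `U(sₙ)` to `U(tₙ)` costs energy: `|U̇| ≤ k + U̇²/(4k)` gives
`|Uₙ(tₙ) - Uₙ(sₙ)| ≤ k (tₙ - sₙ) + J(Uₙ)/(2k)`, so a gap close to `2 - ε > 1` forces
`tₙ - sₙ ≥ c > 0` for large `n`. On `[sₙ, tₙ]` the potential term is at least
`V₀ · min a · (tₙ - sₙ)`, so `a` cannot exceed a fixed level `B` on the whole interval; by
coercivity `{a < B}` is bounded, and `[sₙ, tₙ]`, of length at most `K`, meets it.
-/

lemma abs_le_add_sq_div {x k : ℝ} (hk : 0 < k) : |x| ≤ k + x ^ 2 / (4 * k) := by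
  rw [← sub_le_iff_le_add', le_div_iff₀ (by positivity)]
  nlinarith [sq_nonneg (|x| - 2 * k), sq_abs x]

lemma intervalIntegral_le_integral_of_nonneg {f : ℝ → ℝ} {p q : ℝ} (hpq : p ≤ q)
    (hf : Integrable f) (hf0 : ∀ r, 0 ≤ f r) : ∫ r in p..q, f r ≤ ∫ r, f r := by
  rw [intervalIntegral.integral_of_le hpq]
  exact setIntegral_le_integral hf (ae_of_all _ hf0)

lemma exists_abs_le_of_lt_of_tendsto_atTop {a : ℝ → ℝ} (hbot : Tendsto a atBot atTop)
    (htop : Tendsto a atTop atTop) (B : ℝ) : ∃ R, ∀ r, a r < B → |r| ≤ R := by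
  obtain ⟨R₁, hR₁⟩ := eventually_atTop.mp (htop.eventually_ge_atTop B)
  obtain ⟨R₂, hR₂⟩ := eventually_atBot.mp (hbot.eventually_ge_atTop B)
  refine ⟨max R₁ (-R₂), fun r hr => abs_le.mpr ⟨?_, ?_⟩⟩
  · have : R₂ < r := lt_of_not_ge fun h => (hR₂ r h).not_gt hr
    linarith [le_max_right R₁ (-R₂)]
  · have : r < R₁ := lt_of_not_ge fun h => (hR₁ r h).not_gt hr
    linarith [le_max_left R₁ (-R₂)]

lemma exists_forall_abs_le_of_eventually {s : ℕ → ℝ} {R : ℝ} (h : ∀ᶠ n in atTop, |s n| ≤ R) :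
    ∃ S, ∀ n, |s n| ≤ S := by
  obtain ⟨S, hS⟩ := (isBoundedUnder_of_eventually_le h).bddAbove_range
  exact ⟨S, fun n => hS (mem_range_self n)⟩

section Energy

variable {a V u u' : ℝ → ℝ} {p q : ℝ}

lemma energy_density_nonneg (ha : ∀ r, 0 ≤ a r) (hV : ∀ y, 0 ≤ V y) (r : ℝ) :
    0 ≤ 1 / 2 * u' r ^ 2 + a r * V (u r) := by
  have := mul_nonneg (ha r) (hV (u r))
  positivity

lemma abs_sub_le_of_energy (ha : ∀ r, 0 ≤ a r) (hV : ∀ y, 0 ≤ V y) (hpq : p ≤ q)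
    (hu : u q - u p = ∫ r in p..q, u' r) (hu' : IntervalIntegrable u' volume p q)
    (he : IntervalIntegrable (fun r => 1 / 2 * u' r ^ 2 + a r * V (u r)) volume p q)
    {k : ℝ} (hk : 0 < k) :
    |u q - u p| ≤ k * (q - p) + (∫ r in p..q, 1 / 2 * u' r ^ 2 + a r * V (u r)) / (2 * k) := by
  have hpt : ∀ r, |u' r| ≤ k + (1 / 2 * u' r ^ 2 + a r * V (u r)) / (2 * k) := fun r =>
    calc |u' r| ≤ k + u' r ^ 2 / (4 * k) := abs_le_add_sq_div hk
      _ ≤ k + (1 / 2 * u' r ^ 2 + a r * V (u r)) / (2 * k) := by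
        have := mul_nonneg (ha r) (hV (u r))
        rw [add_le_add_iff_left, div_le_div_iff₀ (by positivity) (by positivity)]
        nlinarith
  calc |u q - u p| ≤ ∫ r in p..q, |u' r| := hu ▸ intervalIntegral.abs_integral_le_integral_abs hpq
    _ ≤ ∫ r in p..q, (k + (1 / 2 * u' r ^ 2 + a r * V (u r)) / (2 * k)) :=
      intervalIntegral.integral_mono_on hpq hu'.abs (intervalIntegrable_const.add (he.div_const _))
        fun r _ => hpt r
    _ = _ := by
      rw [intervalIntegral.integral_add intervalIntegrable_const (he.div_const _),
        intervalIntegral.integral_const, intervalIntegral.integral_div, smul_eq_mul, mul_comm]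

lemma exists_lt_of_integral_energy_lt {B V₀ : ℝ} (ha : ∀ r, 0 ≤ a r) (hV₀ : 0 ≤ V₀)
    (hpq : p ≤ q) (he : IntervalIntegrable (fun r => 1 / 2 * u' r ^ 2 + a r * V (u r)) volume p q)
    (hVu : ∀ r ∈ Icc p q, V₀ ≤ V (u r))
    (hlt : ∫ r in p..q, 1 / 2 * u' r ^ 2 + a r * V (u r) < V₀ * B * (q - p)) :
    ∃ r ∈ Icc p q, a r < B := by
  by_contra! haB
  have hpt : ∀ r ∈ Icc p q, V₀ * B ≤ 1 / 2 * u' r ^ 2 + a r * V (u r) := fun r hr => by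
    have := mul_le_mul (haB r hr) (hVu r hr) hV₀ (ha r)
    nlinarith [sq_nonneg (u' r)]
  have := intervalIntegral.integral_mono_on hpq intervalIntegrable_const he hpt
  rw [intervalIntegral.integral_const, smul_eq_mul, mul_comm] at this
  exact hlt.not_ge this

end Energy

theorem stmt15_general (a Vt : ℝ → ℝ) (l₀ V₀ ε M K : ℝ)
    (hl₀ : 0 < l₀) (ha : ∀ t, l₀ ≤ a t)
    (ha_top : Filter.Tendsto a Filter.atTop Filter.atTop)
    (ha_bot : Filter.Tendsto a Filter.atBot Filter.atTop)
    (hε : ε ∈ Set.Ioo (0 : ℝ) 1) (hV₀ : 0 < V₀)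
    (hVnn : ∀ y, 0 ≤ Vt y)
    (hV : ∀ y ∈ Set.Icc (-1 + ε / 2) (1 - ε / 2), V₀ ≤ Vt y)
    (U U' : ℕ → ℝ → ℝ) (s t : ℕ → ℝ) (hst : ∀ n, s n < t n)
    (hU'loc : ∀ n, MeasureTheory.LocallyIntegrable (U' n))
    (hAC : ∀ n, ∀ p q : ℝ, U n q - U n p = ∫ r in p..q, U' n r)
    (hint : ∀ n, MeasureTheory.Integrable
      (fun r => (1 / 2) * (U' n r) ^ 2 + a r * Vt (U n r)))
    (hJ : ∀ n, (∫ r, ((1 / 2) * (U' n r) ^ 2 + a r * Vt (U n r))) ≤ M)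
    (hUin : ∀ n, ∀ r ∈ Set.Icc (s n) (t n),
      U n r ∈ Set.Icc (-1 + ε / 2) (1 - ε / 2))
    (hK : ∀ n, t n - s n ≤ K)
    (hgap : Filter.Tendsto (fun n => |U n (t n) - U n (s n)|)
      Filter.atTop (nhds (2 - ε))) :
    ∃ S : ℝ, ∀ n, |s n| ≤ S := by
  have ha₀ : ∀ r, 0 ≤ a r := fun r => hl₀.le.trans (ha r)
  have he : ∀ n, IntervalIntegrable (fun r => 1 / 2 * U' n r ^ 2 + a r * Vt (U n r)) volume
      (s n) (t n) := fun n => (hint n).intervalIntegrable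
  have hJn : ∀ n, ∫ r in s n..t n, 1 / 2 * U' n r ^ 2 + a r * Vt (U n r) ≤ M := fun n =>
    (intervalIntegral_le_integral_of_nonneg (hst n).le (hint n)
      (energy_density_nonneg ha₀ hVnn)).trans (hJ n)
  set k := max M 1
  have hk : 0 < k := zero_lt_one.trans_le (le_max_right M 1)
  have hlen : ∀ᶠ n in atTop, 1 / (2 * k) ≤ t n - s n := by
    filter_upwards [hgap.eventually_const_lt (by linarith [hε.2] : (1 : ℝ) < 2 - ε)] with n hn
    have hcross := abs_sub_le_of_energy ha₀ hVnn (hst n).le (hAC n _ _)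
      ((hU'loc n).integrableOn_isCompact isCompact_uIcc).intervalIntegrable (he n) hk
    have hJk : (∫ r in s n..t n, 1 / 2 * U' n r ^ 2 + a r * Vt (U n r)) / (2 * k) ≤ 1 / 2 := by
      rw [div_le_iff₀ (by positivity)]
      linarith [hJn n, le_max_left M 1]
    rw [div_le_iff₀ (by positivity)]
    nlinarith
  set B := (k + 1) * (2 * k) / V₀ with hB
  obtain ⟨R, hR⟩ := exists_abs_le_of_lt_of_tendsto_atTop ha_bot ha_top B
  refine exists_forall_abs_le_of_eventually (R := R + K) (hlen.mono fun n hn => ?_)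
  obtain ⟨r, hr, har⟩ := exists_lt_of_integral_energy_lt ha₀ hV₀.le (hst n).le (he n)
    (fun r hr => hV _ (hUin n r hr)) <| calc
      _ ≤ M := hJn n
      _ < k + 1 := by linarith [le_max_left M 1]
      _ = V₀ * B * (1 / (2 * k)) := by rw [hB, mul_div_cancel₀ _ hV₀.ne']; field_simp
      _ ≤ V₀ * B * (t n - s n) := by gcongr
  obtain ⟨hrR, hRr⟩ := abs_le.mp (hR r har)
  exact abs_le.mpr ⟨by linarith [hr.2, hK n], by linarith [hr.1, hK n, hst n]⟩

theorem stmt15 (a Vt : ℝ → ℝ) (l₀ V₀ ε M K : ℝ)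
    (ha_cont : Continuous a) (hl₀ : 0 < l₀) (ha : ∀ t, l₀ ≤ a t)
    (ha_top : Filter.Tendsto a Filter.atTop Filter.atTop)
    (ha_bot : Filter.Tendsto a Filter.atBot Filter.atTop)
    (hε : ε ∈ Set.Ioo (0 : ℝ) 1) (hV₀ : 0 < V₀)
    (hVnn : ∀ y, 0 ≤ Vt y)
    (hV : ∀ y ∈ Set.Icc (-1 + ε / 2) (1 - ε / 2), V₀ ≤ Vt y)
    (U U' : ℕ → ℝ → ℝ) (s t : ℕ → ℝ) (hst : ∀ n, s n < t n)
    (hU'loc : ∀ n, MeasureTheory.LocallyIntegrable (U' n))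
    (hAC : ∀ n, ∀ p q : ℝ, U n q - U n p = ∫ r in p..q, U' n r)
    (hint : ∀ n, MeasureTheory.Integrable
      (fun r => (1 / 2) * (U' n r) ^ 2 + a r * Vt (U n r)))
    (hJ : ∀ n, (∫ r, ((1 / 2) * (U' n r) ^ 2 + a r * Vt (U n r))) ≤ M)
    (hUin : ∀ n, ∀ r ∈ Set.Icc (s n) (t n),
      U n r ∈ Set.Icc (-1 + ε / 2) (1 - ε / 2))
    (hK : ∀ n, t n - s n ≤ K)
    (hgap : Filter.Tendsto (fun n => |U n (t n) - U n (s n)|)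
      Filter.atTop (nhds (2 - ε))) :
    ∃ S : ℝ, ∀ n, |s n| ≤ S :=
  stmt15_general a Vt l₀ V₀ ε M K hl₀ ha ha_top ha_bot hε hV₀ hVnn hV U U' s t hst hU'loc hAC hint
    hJ hUin hK hgap
end
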